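/- arXiv:1706.04676 — 3 statements merged into one kernel-verified Lean document; each statement's English description precedes it below -/
import Mathlib

section
/- Let (L,|·|) be a complete non-Archimedean valued field and P ∈ L[z] a polynomial of degree d ≥ 2. Then the sequence of functions g_n(z) := d^{-n} log max{1, |P^n(z)|} converges uniformly on L to a function g_P, and the limit satisfies g_P(P(z)) = d · g_P(z) for all z ∈ L. -/
/-!
Tate's telescoping argument. By the basic estimate, `h(z) = log max{1, ‖z‖}` satisfies
`|h(P z) - d h(z)| ≤ M` on all of `L`, so consecutive terms of `g_n = d^{-n} h ∘ P^n` differ by at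
most `M d^{-(n+1)}` in sup norm. The increments are therefore uniformly summable, `g_n` converges
uniformly, and the functional equation passes to the limit from `g_n ∘ P = d g_{n+1}`.
-/

open Filter Real
open scoped Polynomial

theorem exists_tendstoUniformly_of_norm_sub_le {α F : Type*} [NormedAddCommGroup F]
    [CompleteSpace F] {g : ℕ → α → F} {u : ℕ → ℝ} (hu : Summable u)
    (hgu : ∀ n x, ‖g (n + 1) x - g n x‖ ≤ u n) :
    ∃ G : α → F, TendstoUniformly g G atTop := by
  refine ⟨fun x => g 0 x + ∑' k, (g (k + 1) x - g k x), ?_⟩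
  have htelescope : ∀ n x, g n x = g 0 x + ∑ k ∈ Finset.range n, (g (k + 1) x - g k x) := by
    intro n x
    rw [Finset.sum_range_sub (fun k => g k x), add_sub_cancel]
  have hseries := Metric.tendstoUniformly_iff.mp (tendstoUniformly_tsum_nat hu hgu)
  refine Metric.tendstoUniformly_iff.mpr fun ε hε => ?_
  filter_upwards [hseries ε hε] with n hn x
  rw [htelescope n x, dist_add_left]
  exact hn x

theorem exists_tendstoUniformly_one_div_pow_mul_comp_iterate {X : Type*} (f : X → X)
    (h : X → ℝ) {d M : ℝ} (hd : 1 < d) (hM : ∀ x, |h (f x) - d * h x| ≤ M) :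
    ∃ G : X → ℝ, TendstoUniformly (fun n x => 1 / d ^ n * h (f^[n] x)) G atTop ∧
      ∀ x, G (f x) = d * G x := by
  have hd0 : 0 < d := one_pos.trans hd
  set g : ℕ → X → ℝ := fun n x => 1 / d ^ n * h (f^[n] x)
  have hincr : ∀ n x, ‖g (n + 1) x - g n x‖ ≤ M / d * d⁻¹ ^ n := by
    intro n x
    have hdiff : g (n + 1) x - g n x = (h (f (f^[n] x)) - d * h (f^[n] x)) / d ^ (n + 1) := by
      simp only [g, Function.iterate_succ_apply']
      field_simp
      ring
    rw [hdiff, norm_div, Real.norm_eq_abs, norm_pow, Real.norm_of_nonneg hd0.le]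
    calc _ ≤ M / d ^ (n + 1) := by gcongr; exact hM _
      _ = _ := by rw [inv_pow, pow_succ]; field_simp
  have hsum : Summable fun n : ℕ => M / d * d⁻¹ ^ n :=
    (summable_geometric_of_lt_one (by positivity) (inv_lt_one_of_one_lt₀ hd)).mul_left _
  obtain ⟨G, hG⟩ := exists_tendstoUniformly_of_norm_sub_le hsum hincr
  refine ⟨G, hG, fun x => tendsto_nhds_unique (hG.tendsto_at (f x)) ?_⟩
  have hshift : ∀ n, g n (f x) = d * g (n + 1) x := by
    intro n
    simp only [g, Function.iterate_succ_apply]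
    field_simp
    ring
  simp only [hshift]
  exact ((hG.tendsto_at x).comp (tendsto_add_atTop_nat 1)).const_mul d

theorem Real.abs_log_sub_log_le_log {a b C : ℝ} (ha : 0 < a) (hb : 0 < b) (hab : a ≤ C * b)
    (hba : b ≤ C * a) : |log a - log b| ≤ log C := by
  have hC : 0 < C := pos_of_mul_pos_left (ha.trans_le hab) hb.le
  have hlog_ab := log_le_log ha hab
  have hlog_ba := log_le_log hb hba
  rw [log_mul hC.ne' hb.ne'] at hlog_ab
  rw [log_mul hC.ne' ha.ne'] at hlog_ba
  exact abs_sub_le_iff.mpr ⟨by linarith, by linarith⟩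

namespace Polynomial

variable {L : Type*} [NormedField L]

theorem norm_eval_le_sum_norm_coeff_mul_max_one_pow {Q : L[X]} {n : ℕ} (hQ : Q.natDegree ≤ n)
    (z : L) : ‖Q.eval z‖ ≤ (∑ i ∈ Finset.range (n + 1), ‖Q.coeff i‖) * max 1 ‖z‖ ^ n := by
  rw [eval_eq_sum_range' (Nat.lt_succ_of_le hQ), Finset.sum_mul]
  refine (norm_sum_le _ _).trans (Finset.sum_le_sum fun i hi => ?_)
  rw [norm_mul, norm_pow]
  gcongr
  calc ‖z‖ ^ i ≤ max 1 ‖z‖ ^ i := by gcongr; exact le_max_right _ _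
    _ ≤ max 1 ‖z‖ ^ n :=
      pow_le_pow_right₀ (le_max_left _ _) (Nat.lt_succ_iff.mp (Finset.mem_range.mp hi))

theorem max_one_norm_eval_le (P : L[X]) (z : L) :
    max 1 ‖P.eval z‖ ≤
      max 1 (∑ i ∈ Finset.range (P.natDegree + 1), ‖P.coeff i‖) * max 1 ‖z‖ ^ P.natDegree := by
  have hpow : 1 ≤ max 1 ‖z‖ ^ P.natDegree := one_le_pow₀ (le_max_left _ _)
  refine max_le (one_le_mul_of_one_le_of_one_le (le_max_left _ _) hpow) ?_
  calc ‖P.eval z‖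
      ≤ (∑ i ∈ Finset.range (P.natDegree + 1), ‖P.coeff i‖) * max 1 ‖z‖ ^ P.natDegree :=
        norm_eval_le_sum_norm_coeff_mul_max_one_pow le_rfl z
    _ ≤ _ := by gcongr; exact le_max_right _ _

theorem norm_leadingCoeff_mul_norm_pow_le (P : L[X]) (z : L) :
    ‖P.leadingCoeff‖ * ‖z‖ ^ P.natDegree ≤
      ‖P.eval z‖ + (∑ i ∈ Finset.range (P.natDegree - 1 + 1), ‖P.eraseLead.coeff i‖) *
        max 1 ‖z‖ ^ (P.natDegree - 1) := by
  have hsplit : P.leadingCoeff * z ^ P.natDegree = P.eval z - P.eraseLead.eval z := by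
    have hdecomp := congrArg (eval z) P.eraseLead_add_C_mul_X_pow
    simp only [eval_add, eval_mul, eval_C, eval_pow, eval_X] at hdecomp
    linear_combination hdecomp
  rw [← norm_pow, ← norm_mul, hsplit]
  grw [norm_sub_le, norm_eval_le_sum_norm_coeff_mul_max_one_pow P.eraseLead_natDegree_le z]

theorem exists_max_one_norm_pow_le_mul {P : L[X]} (hP : P ≠ 0) :
    ∃ C, ∀ z : L, max 1 ‖z‖ ^ P.natDegree ≤ C * max 1 ‖P.eval z‖ := by
  rcases Nat.eq_zero_or_pos P.natDegree with hd | hd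
  · exact ⟨1, fun z => by simp [hd]⟩
  set a := ‖P.leadingCoeff‖
  set B := ∑ i ∈ Finset.range (P.natDegree - 1 + 1), ‖P.eraseLead.coeff i‖
  have ha : 0 < a := norm_pos_iff.mpr (leadingCoeff_ne_zero.mpr hP)
  set R := max 1 (2 * B / a)
  refine ⟨max (R ^ P.natDegree) (2 / a), fun z => ?_⟩
  have hPz : 1 ≤ max 1 ‖P.eval z‖ := le_max_left _ _
  by_cases hz : ‖z‖ ≤ R
  · calc max 1 ‖z‖ ^ P.natDegree ≤ R ^ P.natDegree := by
          gcongr; exact max_le (le_max_left _ _) hz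
      _ ≤ max (R ^ P.natDegree) (2 / a) := le_max_left _ _
      _ ≤ _ := le_mul_of_one_le_right (by positivity) hPz
  -- For `‖z‖ ≥ R` the lower-order terms are at most half of the leading term.
  replace hz := (not_le.mp hz).le
  have hz1 : 1 ≤ ‖z‖ := (le_max_left _ _).trans hz
  have hBz : B ≤ a / 2 * ‖z‖ := by
    have := (le_max_right 1 (2 * B / a)).trans hz
    rw [div_le_iff₀ ha] at this
    linarith
  have hlead := norm_leadingCoeff_mul_norm_pow_le P z
  rw [max_eq_right hz1] at hlead ⊢
  have hpow : ‖z‖ ^ P.natDegree = ‖z‖ ^ (P.natDegree - 1) * ‖z‖ := by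
    rw [← pow_succ, Nat.sub_add_cancel hd]
  have hhalf : a / 2 * ‖z‖ ^ P.natDegree ≤ ‖P.eval z‖ := by
    nlinarith [mul_le_mul_of_nonneg_left hBz (pow_nonneg (norm_nonneg z) (P.natDegree - 1))]
  calc ‖z‖ ^ P.natDegree ≤ 2 / a * ‖P.eval z‖ := by
        rw [div_mul_eq_mul_div, le_div_iff₀ ha]
        linarith
    _ ≤ _ := by gcongr <;> exact le_max_right _ _

theorem exists_abs_log_max_one_norm_eval_sub_le {P : L[X]} (hP : P ≠ 0) :
    ∃ M, ∀ z : L, |log (max 1 ‖P.eval z‖) - P.natDegree * log (max 1 ‖z‖)| ≤ M := by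
  obtain ⟨C₁, hC₁⟩ := exists_max_one_norm_pow_le_mul hP
  set C₂ := max 1 (∑ i ∈ Finset.range (P.natDegree + 1), ‖P.coeff i‖)
  refine ⟨log (max C₁ C₂), fun z => ?_⟩
  rw [← log_pow]
  have hz : 0 < max 1 ‖z‖ ^ P.natDegree := pow_pos (one_pos.trans_le (le_max_left _ _)) _
  have hPz : 0 < max 1 ‖P.eval z‖ := one_pos.trans_le (le_max_left _ _)
  refine abs_log_sub_log_le_log hPz hz ?_ ?_
  · exact (max_one_norm_eval_le P z).trans
      (mul_le_mul_of_nonneg_right (le_max_right _ _) hz.le)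
  · exact (hC₁ z).trans (mul_le_mul_of_nonneg_right (le_max_left _ _) hPz.le)

end Polynomial

theorem stmt1_general {L : Type*} [NormedField L]
    (P : Polynomial L) (d : ℕ) (hd : 2 ≤ d) (hdeg : P.natDegree = d) :
    ∃ gP : L → ℝ,
      TendstoUniformly
        (fun (n : ℕ) (z : L) =>
          (1 / (d : ℝ) ^ n) * Real.log (max 1 ‖(fun w => Polynomial.eval w P)^[n] z‖))
        gP Filter.atTop ∧
      ∀ z : L, gP (Polynomial.eval z P) = (d : ℝ) * gP z := by
  have hP : P ≠ 0 := by
    rintro rfl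
    simp only [Polynomial.natDegree_zero] at hdeg
    omega
  obtain ⟨M, hM⟩ := Polynomial.exists_abs_log_max_one_norm_eval_sub_le hP
  rw [hdeg] at hM
  exact exists_tendstoUniformly_one_div_pow_mul_comp_iterate (fun w => P.eval w)
    (fun z => log (max 1 ‖z‖)) (Nat.one_lt_cast.mpr hd) hM

/-- The sequence `g_n(z) = d^{-n} log max{1,‖P^n(z)‖}` converges uniformly on `L`
to a function `g_P` satisfying `g_P ∘ P = d · g_P`. -/
theorem stmt1 {L : Type*} [NormedField L] [CompleteSpace L] [IsUltrametricDist L]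
    (P : Polynomial L) (d : ℕ) (hd : 2 ≤ d) (hdeg : P.natDegree = d) :
    ∃ gP : L → ℝ,
      TendstoUniformly
        (fun (n : ℕ) (z : L) =>
          (1 / (d : ℝ) ^ n) * Real.log (max 1 ‖(fun w => Polynomial.eval w P)^[n] z‖))
        gP Filter.atTop ∧
      ∀ z : L, gP (Polynomial.eval z P) = (d : ℝ) * gP z :=
  stmt1_general P d hd hdeg
end

section
/- Let (L,|·|) be a complete non-Archimedean valued field with discrete value group, P ∈ L[z] of degree d ≥ 2, and a ∈ L. If g_P(a) > 0 then the iterates P^n(a) tend to infinity in norm, and moreover g_P(a) is a rational number. -/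
/-!
Outside a large ball the ultrametric inequality makes the leading term dominate exactly:
`‖P z‖ = ‖a₀‖ ‖z‖ ^ d`. Positivity of `g_P(a)` makes `log ‖Pⁿ(a)‖` grow like `dⁿ`, so the orbit
enters that region, after which `sₙ = log ‖Pⁿ(a)‖` obeys `sₙ₊₁ = log ‖a₀‖ + d sₙ`. Solving this
recurrence gives `g_P(a) = (s_N + log ‖a₀‖ / (d - 1)) / d ^ N`, which is rational because the
value group is `e^ℤ`, so that `s_N` and `log ‖a₀‖` are integers.
-/

open Filter Topology Polynomial Bornology

theorem IsUltrametricDist.norm_eq_of_norm_sub_lt {F : Type*} [SeminormedAddCommGroup F]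
    [IsUltrametricDist F] {u v : F} (h : ‖u - v‖ < ‖v‖) : ‖u‖ = ‖v‖ := by
  rw [← sub_add_cancel u v, norm_add_eq_max_of_norm_ne_norm h.ne, max_eq_right h.le]

theorem Polynomial.eventually_norm_eval_eq_of_isUltrametricDist {L : Type*} [NormedField L]
    [IsUltrametricDist L] (P : L[X]) :
    ∀ᶠ z in cobounded L, ‖P.eval z‖ = ‖P.leadingCoeff‖ * ‖z‖ ^ P.natDegree := by
  rcases eq_or_ne P 0 with rfl | hP
  · simp
  have hlead : P.leadingCoeff ≠ 0 := leadingCoeff_ne_zero.mpr hP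
  filter_upwards [isEquivalent_cobounded_leading_monomial.isLittleO.def one_half_pos,
    eventually_ne_cobounded 0] with z hz hz0
  rw [← norm_pow, ← norm_mul]
  refine IsUltrametricDist.norm_eq_of_norm_sub_lt (hz.trans_lt ?_)
  have : 0 < ‖P.leadingCoeff * z ^ P.natDegree‖ :=
    norm_pos_iff.mpr (mul_ne_zero hlead (pow_ne_zero _ hz0))
  linarith

theorem tendsto_atTop_of_tendsto_log_max_one_div_pow {u : ℕ → ℝ} {d g : ℝ} (hd : 1 < d)
    (hg : 0 < g) (h : Tendsto (fun n => Real.log (max 1 (u n)) / d ^ n) atTop (𝓝 g)) :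
    Tendsto u atTop atTop := by
  have hlog : Tendsto (fun n => Real.log (max 1 (u n))) atTop atTop :=
    (h.pos_mul_atTop hg (tendsto_pow_atTop_atTop_of_one_lt hd)).congr fun n => by
      field_simp
  have hmax : Tendsto (fun n => max 1 (u n)) atTop atTop :=
    (Real.tendsto_exp_atTop.comp hlog).congr fun n =>
      Real.exp_log (one_pos.trans_le (le_max_left _ _))
  refine tendsto_atTop.2 fun b => (hmax.eventually_gt_atTop (max 1 b)).mono fun n hn => ?_
  grind

theorem tendsto_div_pow_of_eq_add_mul {s : ℕ → ℝ} {c d : ℝ} (hd : 1 < d) {N : ℕ}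
    (hs : ∀ n ≥ N, s (n + 1) = c + d * s n) :
    Tendsto (fun n => s n / d ^ n) atTop (𝓝 ((s N + c / (d - 1)) / d ^ N)) := by
  set C := c / (d - 1)
  have hd0 : d ≠ 0 := by positivity
  -- `s n + C` is multiplied by `d` at each step, so `(s n + C) / d ^ n` is eventually constant
  have hgeom : ∀ k, s (N + k) + C = d ^ k * (s N + C) := by
    intro k
    induction k with
    | zero => simp
    | succ k ih =>
      rw [← add_assoc, hs _ (Nat.le_add_right N k), pow_succ]
      have : d - 1 ≠ 0 := by linarith
      simp only [C] at ih ⊢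
      field_simp at ih ⊢
      linear_combination d * ih
  have hconst : ∀ᶠ n in atTop, (s N + C) / d ^ N = (s n + C) / d ^ n := by
    filter_upwards [eventually_ge_atTop N] with n hn
    obtain ⟨k, rfl⟩ := Nat.exists_eq_add_of_le hn
    rw [hgeom, pow_add]
    field_simp
  have hinv : Tendsto (fun n => C * (d ^ n)⁻¹) atTop (𝓝 (C * 0)) :=
    (tendsto_inv_atTop_zero.comp (tendsto_pow_atTop_atTop_of_one_lt hd)).const_mul C
  have := (tendsto_const_nhds.congr' hconst).sub hinv
  rw [mul_zero, sub_zero] at this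
  refine this.congr fun n => ?_
  field_simp
  ring

theorem Polynomial.exists_tendsto_log_norm_iterate_div_pow {L : Type*} [NormedField L]
    [IsUltrametricDist L] {P : L[X]} (hP : 1 < P.natDegree) {a : L}
    (hesc : Tendsto (fun n => ‖(fun w => P.eval w)^[n] a‖) atTop atTop) :
    ∃ N, 1 < ‖(fun w => P.eval w)^[N] a‖ ∧
      Tendsto (fun n => Real.log (max 1 ‖(fun w => P.eval w)^[n] a‖) / (P.natDegree : ℝ) ^ n)
        atTop (𝓝 ((Real.log ‖(fun w => P.eval w)^[N] a‖ +
          Real.log ‖P.leadingCoeff‖ / (P.natDegree - 1)) / (P.natDegree : ℝ) ^ N)) := by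
  set x : ℕ → L := fun n => (fun w => P.eval w)^[n] a
  obtain ⟨N, hN⟩ := eventually_atTop.1 <|
    ((tendsto_norm_atTop_iff_cobounded.1 hesc).eventually
      P.eventually_norm_eval_eq_of_isUltrametricDist).and (hesc.eventually_gt_atTop 1)
  have hlead : ‖P.leadingCoeff‖ ≠ 0 :=
    norm_ne_zero_iff.mpr (leadingCoeff_ne_zero.mpr (ne_zero_of_natDegree_gt hP))
  have hrec : ∀ n ≥ N, Real.log ‖x (n + 1)‖ =
      Real.log ‖P.leadingCoeff‖ + P.natDegree * Real.log ‖x n‖ := by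
    intro n hn
    have hxn : ‖x n‖ ^ P.natDegree ≠ 0 := pow_ne_zero _ (one_pos.trans (hN n hn).2).ne'
    rw [show x (n + 1) = P.eval (x n) from Function.iterate_succ_apply' _ _ _, (hN n hn).1,
      Real.log_mul hlead hxn, Real.log_pow]
  refine ⟨N, (hN N le_rfl).2, ?_⟩
  refine (tendsto_div_pow_of_eq_add_mul (s := fun n => Real.log ‖x n‖)
    (by exact_mod_cast hP) hrec).congr' ?_
  filter_upwards [eventually_ge_atTop N] with n hn
  rw [max_eq_right (hN n hn).2.le]

theorem stmt4_general {L : Type*} [NormedField L] [IsUltrametricDist L]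
    (hdisc : ∀ x : L, x ≠ 0 → ∃ n : ℤ, ‖x‖ = Real.exp n)
    (P : Polynomial L) (d : ℕ) (hd : 2 ≤ d) (hdeg : P.natDegree = d)
    (gP : L → ℝ)
    (hgP : ∀ z : L, Filter.Tendsto
      (fun (n : ℕ) =>
        (1 / (d : ℝ) ^ n) * Real.log (max 1 ‖(fun w => Polynomial.eval w P)^[n] z‖))
      Filter.atTop (nhds (gP z)))
    (a : L) (ha : 0 < gP a) :
    Filter.Tendsto (fun n : ℕ => ‖(fun w => Polynomial.eval w P)^[n] a‖)
      Filter.atTop Filter.atTop ∧ ∃ q : ℚ, gP a = q := by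
  subst hdeg
  have hg := (hgP a).congr fun n => one_div_mul_eq_div _ _
  have hesc := tendsto_atTop_of_tendsto_log_max_one_div_pow (by exact_mod_cast hd) ha hg
  refine ⟨hesc, ?_⟩
  obtain ⟨N, hN, hlim⟩ := P.exists_tendsto_log_norm_iterate_div_pow hd hesc
  obtain ⟨m, hm⟩ := hdisc _ (norm_pos_iff.mp (one_pos.trans hN))
  obtain ⟨j, hj⟩ := hdisc P.leadingCoeff
    (leadingCoeff_ne_zero.mpr (ne_zero_of_natDegree_gt hd))
  refine ⟨((m : ℚ) + j / ((P.natDegree : ℚ) - 1)) / (P.natDegree : ℚ) ^ N, ?_⟩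
  rw [tendsto_nhds_unique hg hlim, hm, hj, Real.log_exp, Real.log_exp]
  push_cast
  ring

/-- If the value group of `L` is discrete (`‖x‖ ∈ e^ℤ` for `x ≠ 0`) and `g_P(a) > 0`,
then the iterates of `a` tend to infinity in norm and `g_P(a)` is rational. -/
theorem stmt4 {L : Type*} [NormedField L] [CompleteSpace L] [IsUltrametricDist L]
    (hdisc : ∀ x : L, x ≠ 0 → ∃ n : ℤ, ‖x‖ = Real.exp n)
    (P : Polynomial L) (d : ℕ) (hd : 2 ≤ d) (hdeg : P.natDegree = d)
    (gP : L → ℝ)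
    (hgP : ∀ z : L, Filter.Tendsto
      (fun (n : ℕ) =>
        (1 / (d : ℝ) ^ n) * Real.log (max 1 ‖(fun w => Polynomial.eval w P)^[n] z‖))
      Filter.atTop (nhds (gP z)))
    (a : L) (ha : 0 < gP a) :
    Filter.Tendsto (fun n : ℕ => ‖(fun w => Polynomial.eval w P)^[n] a‖)
      Filter.atTop Filter.atTop ∧ ∃ q : ℚ, gP a = q :=
  stmt4_general hdisc P d hd hdeg gP hgP a ha
end

section
/- Let C_1 ≥ 1, A ≥ 2, and let P_t(z) be a family of polynomials over a complete valued field k satisfying max{1,|P_t(z)|} ≤ C_1 · max{1, |z|^δ, |t|·|z|^d} for all z ∈ k and t in the unit disk, where 1 ≤ δ < d. Suppose a: 𝔻 → k satisfies |a(t)| ≤ A for |t| ≤ 1/2. Then for every n ≥ 1 and every t with |t| = (C_1^{1+δ+...+δ^{n-2}} · A^{δ^{n-1}})^{δ−d}, one has max{1, |P_t^n(a(t))|} ≤ C_1^{1+δ+...+δ^{n-1}} · A^{δ^n}. -/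
/-- Lemma 6 of the paper: under the degenerate estimate
`max{1,‖P_t(z)‖} ≤ C₁ max{1, ‖z‖^δ, ‖t‖‖z‖^d}` with `1 ≤ δ < d`, and `‖a(t)‖ ≤ A`
for `‖t‖ ≤ 1/2`, for every `n ≥ 1` and `‖t‖ = (C₁^{1+⋯+δ^{n-2}} A^{δ^{n-1}})^{δ-d}`
one has `max{1,‖P_t^n(a(t))‖} ≤ C₁^{1+⋯+δ^{n-1}} A^{δ^n}`. -/
theorem stmt10 {k : Type*} [NormedField k]
    (d δ : ℕ) (hδ1 : 1 ≤ δ) (hδd : δ < d)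
    (C₁ A : ℝ) (hC₁ : 1 ≤ C₁) (hA : 2 ≤ A)
    (P : k → k → k) (a : k → k)
    (hP : ∀ (t z : k), ‖t‖ < 1 →
      max 1 ‖P t z‖ ≤ C₁ * max (max 1 (‖z‖ ^ δ)) (‖t‖ * ‖z‖ ^ d))
    (ha : ∀ t : k, ‖t‖ ≤ 1 / 2 → ‖a t‖ ≤ A) :
    ∀ n : ℕ, 1 ≤ n → ∀ t : k,
      ‖t‖ = (C₁ ^ (∑ j ∈ Finset.range (n - 1), δ ^ j) * A ^ (δ ^ (n - 1)))
              ^ ((δ : ℤ) - (d : ℤ)) →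
      max 1 ‖(P t)^[n] (a t)‖ ≤ C₁ ^ (∑ j ∈ Finset.range n, δ ^ j) * A ^ (δ ^ n) := by
  intro n hn t ht
  set B : ℕ → ℝ := fun m => C₁ ^ (∑ j ∈ Finset.range m, δ ^ j) * A ^ (δ ^ m) with hBdef
  have hA1 : (1:ℝ) ≤ A := by linarith
  have hB1 : ∀ m, (1:ℝ) ≤ B m := by
    intro m
    have h1 : (1:ℝ) ≤ C₁ ^ (∑ j ∈ Finset.range m, δ ^ j) := one_le_pow₀ hC₁
    have h2 : (1:ℝ) ≤ A ^ (δ ^ m) := one_le_pow₀ hA1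
    calc (1:ℝ) = 1 * 1 := by ring
    _ ≤ _ := mul_le_mul h1 h2 zero_le_one (le_trans zero_le_one h1)
  have hB0 : ∀ m, (0:ℝ) < B m := fun m => lt_of_lt_of_le zero_lt_one (hB1 m)
  have hBmono : ∀ m m', m ≤ m' → B m ≤ B m' := by
    intro m m' h
    have hsum : (∑ j ∈ Finset.range m, δ ^ j) ≤ ∑ j ∈ Finset.range m', δ ^ j :=
      Finset.sum_le_sum_of_subset (Finset.range_subset_range.2 h)
    have hpow : δ ^ m ≤ δ ^ m' := Nat.pow_le_pow_right hδ1 h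
    exact mul_le_mul (pow_le_pow_right₀ hC₁ hsum) (pow_le_pow_right₀ hA1 hpow)
      (by positivity) (by positivity)
  -- ‖t‖ ≤ 1/2
  have hBA : (2:ℝ) ≤ B (n-1) := le_trans hA (le_trans (by
      have h2 : A ^ (δ ^ (n-1)) ≥ A ^ 1 := pow_le_pow_right₀ hA1 (Nat.one_le_pow _ _ hδ1)
      have h1 : (1:ℝ) ≤ C₁ ^ (∑ j ∈ Finset.range (n-1), δ ^ j) := one_le_pow₀ hC₁
      calc A = 1 * A ^ 1 := by ring
      _ ≤ C₁ ^ (∑ j ∈ Finset.range (n-1), δ ^ j) * A ^ (δ ^ (n-1)) :=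
          mul_le_mul h1 h2 (by positivity) (by positivity)) (le_refl _))
  have ht2 : ‖t‖ ≤ 1 / 2 := by
    rw [ht]
    have hexp : ((δ:ℤ) - (d:ℤ)) ≤ -1 := by
      have : (δ:ℤ) < (d:ℤ) := by exact_mod_cast hδd
      omega
    calc (B (n-1)) ^ ((δ:ℤ) - (d:ℤ)) ≤ (B (n-1)) ^ (-1 : ℤ) :=
          zpow_le_zpow_right₀ (hB1 _) hexp
    _ = 1 / B (n-1) := by rw [zpow_neg_one]; exact (one_div _).symm
    _ ≤ 1 / 2 := one_div_le_one_div_of_le (by norm_num) hBA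
  have ht1 : ‖t‖ < 1 := lt_of_le_of_lt ht2 (by norm_num)
  -- key: for m ≤ n - 1, ‖t‖ * B m ^ d ≤ B m ^ δ
  have hkey : ∀ m, m ≤ n - 1 → ‖t‖ * B m ^ d ≤ B m ^ δ := by
    intro m hm
    have hBm := hB0 m
    have hBn := hB0 (n-1)
    have hratio : B m / B (n-1) ≤ 1 := (div_le_one hBn).2 (hBmono m (n-1) hm)
    have hratio0 : 0 < B m / B (n-1) := div_pos hBm hBn
    have hrpow : (B m / B (n-1)) ^ d ≤ (B m / B (n-1)) ^ δ :=
      pow_le_pow_of_le_one hratio0.le hratio (le_of_lt hδd)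
    have heq : ‖t‖ * B m ^ d = B (n-1) ^ δ * (B m / B (n-1)) ^ d := by
      rw [ht, zpow_sub₀ (ne_of_gt hBn), zpow_natCast, zpow_natCast, div_pow]
      field_simp
    rw [heq]
    calc B (n-1) ^ δ * (B m / B (n-1)) ^ d ≤ B (n-1) ^ δ * (B m / B (n-1)) ^ δ :=
        mul_le_mul_of_nonneg_left hrpow (by positivity)
    _ = (B (n-1) * (B m / B (n-1))) ^ δ := (mul_pow _ _ _).symm
    _ = B m ^ δ := by rw [mul_div_cancel₀ _ (ne_of_gt hBn)]
  -- successor relation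
  have hsucc : ∀ m, C₁ * B m ^ δ = B (m+1) := by
    intro m
    have hs : (∑ j ∈ Finset.range (m+1), δ ^ j) = (∑ j ∈ Finset.range m, δ ^ j) * δ + 1 := by
      rw [Finset.sum_range_succ']
      simp [pow_succ, Finset.sum_mul]
    have hB1eq : B (m+1)
        = C₁ ^ ((∑ j ∈ Finset.range m, δ ^ j) * δ + 1) * A ^ (δ ^ m * δ) := by
      simp only [hBdef, hs, pow_succ]
    rw [hB1eq]
    simp only [hBdef]
    rw [mul_pow, ← pow_mul, ← pow_mul, pow_add, pow_one]
    ring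
  -- inner induction
  have main : ∀ m, m ≤ n → max 1 ‖(P t)^[m] (a t)‖ ≤ B m := by
    intro m
    induction m with
    | zero =>
      intro _
      simp only [Function.iterate_zero, id_eq]
      have : ‖a t‖ ≤ A := ha t ht2
      have hB0A : B 0 = A := by simp [hBdef]
      rw [hB0A]
      exact max_le hA1 this
    | succ m ih =>
      intro hm
      have ihm := ih (le_trans (Nat.le_succ m) hm)
      set z := (P t)^[m] (a t) with hz
      have hzB : ‖z‖ ≤ B m := le_trans (le_max_right 1 _) ihm
      have hz0 : (0:ℝ) ≤ ‖z‖ := norm_nonneg _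
      rw [Function.iterate_succ_apply']
      calc max 1 ‖P t z‖ ≤ C₁ * max (max 1 (‖z‖ ^ δ)) (‖t‖ * ‖z‖ ^ d) := hP t z ht1
      _ ≤ C₁ * B m ^ δ := by
          apply mul_le_mul_of_nonneg_left _ (le_trans zero_le_one hC₁)
          apply max_le (max_le (one_le_pow₀ (hB1 m)) (pow_le_pow_left₀ hz0 hzB δ))
          calc ‖t‖ * ‖z‖ ^ d ≤ ‖t‖ * B m ^ d :=
              mul_le_mul_of_nonneg_left (pow_le_pow_left₀ hz0 hzB d) (norm_nonneg t)
          _ ≤ B m ^ δ := hkey m (by omega)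
      _ = B (m+1) := hsucc m
  exact main n (le_refl n)
end
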